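/- Let w be an infinite binary word, M > 0 a real number, and n, k ≥ 1 integers such that w_{n+i−1} = 0 for all 1 ≤ i ≤ k and M^k / k! ≤ 1. Then d_{n+k}(w) · M^{n+k} / (n+k)! ≤ d_n(w) · M^n / n!. -/

import Mathlib

open Filter

/-- `dCount w n` is the number of permutations `π` of `{1,…,n}` (modeled as `Fin n`,
zero-based) such that for every `1 ≤ i ≤ n-1`, `π(i) > π(i+1)` iff the `i`-th letter of the
infinite binary word `w` (1-indexed, `w 0` is irrelevant) equals `1` (i.e. `true`). -/
noncomputable def dCount (w : ℕ → Bool) (n : ℕ) : ℕ :=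
  Nat.card {π : Equiv.Perm (Fin n) //
    ∀ i : ℕ, ∀ h : i + 1 < n,
      (π ⟨i + 1, h⟩ < π ⟨i, Nat.lt_of_succ_lt h⟩ ↔ w (i + 1) = true)}

/-! A permutation counted by `dCount w (n + k)` ascends on its last `k` positions, so it is
determined by the `k`-set of values it takes there together with the standardization of its
first `n` values, which is itself counted by `dCount w n`. Hence
`d_{n+k} ≤ (n+k choose k) d_n`, and `(n+k choose k) M^(n+k) / (n+k)! = (M^n / n!) (M^k / k!)`. -/

open Finset

def HasDescentWord (w : ℕ → Bool) {m : ℕ} (π : Equiv.Perm (Fin m)) : Prop :=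
  ∀ i : ℕ, ∀ h : i + 1 < m,
    (π ⟨i + 1, h⟩ < π ⟨i, Nat.lt_of_succ_lt h⟩ ↔ w (i + 1) = true)

theorem dCount_eq_card (w : ℕ → Bool) (m : ℕ) :
    dCount w m = Nat.card {π : Equiv.Perm (Fin m) // HasDescentWord w π} := rfl

namespace Equiv.Perm

variable {n k : ℕ} (π : Perm (Fin (n + k)))

def tailValues : Finset (Fin (n + k)) :=
  univ.map ((Fin.natAddEmb n).trans π.toEmbedding)

theorem card_tailValues : #π.tailValues = k := by
  simp [tailValues]

theorem card_compl_tailValues : #π.tailValuesᶜ = n := by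
  simp [card_compl, card_tailValues]

theorem apply_castAdd_mem_compl_tailValues (j : Fin n) :
    π (Fin.castAdd k j) ∈ π.tailValuesᶜ := by
  simp only [tailValues, mem_compl, Finset.mem_map, mem_univ, true_and, not_exists,
    Function.Embedding.trans_apply, Fin.natAddEmb_apply, Function.Embedding.coeFn_mk,
    EmbeddingLike.apply_eq_iff_eq, Fin.ext_iff, Fin.val_natAdd, Fin.val_castAdd]
  omega

theorem apply_natAdd_mem_tailValues (j : Fin k) : π (Fin.natAdd n j) ∈ π.tailValues :=
  mem_map_of_mem _ (mem_univ j)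

noncomputable def headStd : Perm (Fin n) :=
  Equiv.ofBijective
    (fun j => (π.tailValuesᶜ.orderIsoOfFin π.card_compl_tailValues).symm
      ⟨π (Fin.castAdd k j), π.apply_castAdd_mem_compl_tailValues j⟩)
    (Finite.injective_iff_bijective.mp fun _ _ h =>
      Fin.castAdd_injective n k (π.injective (congrArg Subtype.val (OrderIso.injective _ h))))

theorem headStd_lt_headStd_iff (a b : Fin n) :
    π.headStd a < π.headStd b ↔ π (Fin.castAdd k a) < π (Fin.castAdd k b) :=
  (π.tailValuesᶜ.orderIsoOfFin π.card_compl_tailValues).symm.lt_iff_lt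

theorem orderEmbOfFin_headStd (j : Fin n) :
    π.tailValuesᶜ.orderEmbOfFin π.card_compl_tailValues (π.headStd j) =
      π (Fin.castAdd k j) := by
  rw [← coe_orderIsoOfFin_apply]
  exact congrArg Subtype.val (OrderIso.apply_symm_apply _ _)

theorem apply_natAdd_eq_orderEmbOfFin (hπ : StrictMono (π ∘ Fin.natAdd n)) (j : Fin k) :
    π (Fin.natAdd n j) = π.tailValues.orderEmbOfFin π.card_tailValues j :=
  congrFun (orderEmbOfFin_unique _ π.apply_natAdd_mem_tailValues hπ) j

theorem ext_of_headStd_eq_of_tailValues_eq {π' : Perm (Fin (n + k))}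
    (hπ : StrictMono (π ∘ Fin.natAdd n)) (hπ' : StrictMono (π' ∘ Fin.natAdd n))
    (hhead : π.headStd = π'.headStd) (htail : π.tailValues = π'.tailValues) : π = π' := by
  ext1 x
  refine Fin.addCases (fun j => ?_) (fun j => ?_) x
  · rw [← orderEmbOfFin_headStd, ← orderEmbOfFin_headStd, hhead]
    simp only [htail]
  · rw [apply_natAdd_eq_orderEmbOfFin π hπ, apply_natAdd_eq_orderEmbOfFin π' hπ']
    simp only [htail]

end Equiv.Perm

namespace HasDescentWord

variable {w : ℕ → Bool} {n k : ℕ} {π : Equiv.Perm (Fin (n + k))}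

theorem headStd (h : HasDescentWord w π) : HasDescentWord w π.headStd := fun i hi => by
  rw [Equiv.Perm.headStd_lt_headStd_iff]
  exact h i (by omega)

theorem strictMono_natAdd (h : HasDescentWord w π)
    (hw : ∀ i, 1 ≤ i → i < k → w (n + i) = false) : StrictMono (π ∘ Fin.natAdd n) := by
  cases k with
  | zero => exact fun a => a.elim0
  | succ k =>
    refine Fin.strictMono_iff_lt_succ.mpr fun i => ?_
    have hi : n + i + 1 < n + (k + 1) := by omega
    have hasc : ¬ π ⟨n + i + 1, hi⟩ < π ⟨n + i, by omega⟩ := by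
      rw [h (n + i) hi, add_assoc, hw (i + 1) (by omega) (by omega)]
      decide
    refine lt_of_le_of_ne (not_lt.mp hasc) fun heq => ?_
    simpa [Fin.ext_iff] using π.injective heq

end HasDescentWord

theorem dCount_add_le_mul_choose (w : ℕ → Bool) (n k : ℕ)
    (hw : ∀ i, 1 ≤ i → i < k → w (n + i) = false) :
    dCount w (n + k) ≤ dCount w n * (n + k).choose k := by
  let F : {π : Equiv.Perm (Fin (n + k)) // HasDescentWord w π} →
      {σ : Equiv.Perm (Fin n) // HasDescentWord w σ} × {s : Finset (Fin (n + k)) // #s = k} :=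
    fun π => (⟨π.1.headStd, π.2.headStd⟩, ⟨π.1.tailValues, π.1.card_tailValues⟩)
  have hF : Function.Injective F := fun π π' h =>
    Subtype.ext <| π.1.ext_of_headStd_eq_of_tailValues_eq (π.2.strictMono_natAdd hw)
      (π'.2.strictMono_natAdd hw) (congrArg (·.1.1) h) (congrArg (·.2.1) h)
  calc dCount w (n + k) ≤ Nat.card ({σ : Equiv.Perm (Fin n) // HasDescentWord w σ} ×
        {s : Finset (Fin (n + k)) // #s = k}) := Nat.card_le_card_of_injective F hF
    _ = dCount w n * (n + k).choose k := by
      rw [Nat.card_prod, Nat.card_eq_fintype_card (α := {s : Finset _ // _}),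
        Fintype.card_finset_len, Fintype.card_fin, dCount_eq_card]

theorem add_choose_mul_pow_div_factorial (M : ℝ) (n k : ℕ) :
    ((n + k).choose k : ℝ) * M ^ (n + k) / (n + k).factorial =
      M ^ n / n.factorial * (M ^ k / k.factorial) := by
  rw [← Nat.add_choose_mul_factorial_mul_factorial n k]
  have : ((n + k).choose k : ℝ) ≠ 0 := by
    exact_mod_cast (Nat.choose_pos (Nat.le_add_left k n)).ne'
  push_cast
  field_simp
  ring

theorem stmt11_general (w : ℕ → Bool) (M : ℝ) (hM : 0 < M) (n k : ℕ)
    (hw : ∀ i : ℕ, 1 ≤ i → i ≤ k → w (n + i - 1) = false)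
    (hMk : M ^ k / (Nat.factorial k : ℝ) ≤ 1) :
    (dCount w (n + k) : ℝ) * M ^ (n + k) / (Nat.factorial (n + k) : ℝ) ≤
      (dCount w n : ℝ) * M ^ n / (Nat.factorial n : ℝ) := by
  have hasc : ∀ i, 1 ≤ i → i < k → w (n + i) = false := fun i hi hik => by
    simpa using hw (i + 1) (by omega) (by omega)
  have hcount : (dCount w (n + k) : ℝ) ≤ dCount w n * (n + k).choose k := by
    exact_mod_cast dCount_add_le_mul_choose w n k hasc
  calc (dCount w (n + k) : ℝ) * M ^ (n + k) / (n + k).factorial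
      ≤ dCount w n * (n + k).choose k * M ^ (n + k) / (n + k).factorial := by gcongr
    _ = dCount w n * M ^ n / n.factorial * (M ^ k / k.factorial) := by
      rw [mul_assoc _ ((n + k).choose k : ℝ), mul_div_assoc, add_choose_mul_pow_div_factorial]
      ring
    _ ≤ dCount w n * M ^ n / n.factorial := mul_le_of_le_one_right (by positivity) hMk

theorem stmt11 (w : ℕ → Bool) (M : ℝ) (hM : 0 < M) (n k : ℕ) (hn : 1 ≤ n) (hk : 1 ≤ k)
    (hw : ∀ i : ℕ, 1 ≤ i → i ≤ k → w (n + i - 1) = false)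
    (hMk : M ^ k / (Nat.factorial k : ℝ) ≤ 1) :
    (dCount w (n + k) : ℝ) * M ^ (n + k) / (Nat.factorial (n + k) : ℝ) ≤
      (dCount w n : ℝ) * M ^ n / (Nat.factorial n : ℝ) :=
  stmt11_general w M hM n k hw hMk
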